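/- arXiv:1704.05494 — 6 statements merged into one kernel-verified Lean document; each statement's English description precedes it below -/
import Mathlib

section
/- If S is a nonempty set of positive integers that is the pinnacle set of some permutation in S_n, and t satisfies max S ≤ t ≤ n, then p_S(n) = 2^{n-t} · p_S(t). -/
/-- `i` is a peak of the permutation `w` of `{1,…,n}` (represented on `Fin n`):
`0 < i < n-1` (0-indexed) and `w(i-1) < w(i) > w(i+1)`. -/
def IsPeak {n : ℕ} (w : Equiv.Perm (Fin n)) (i : Fin n) : Prop :=
  0 < i.val ∧ ∃ h : i.val + 1 < n,
    w ⟨i.val - 1, Nat.lt_of_le_of_lt (Nat.sub_le _ _) i.isLt⟩ < w i ∧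
    w ⟨i.val + 1, h⟩ < w i

/-- The pinnacle set of `w`, as a set of values in `{1,…,n}`. -/
def Pin {n : ℕ} (w : Equiv.Perm (Fin n)) : Set ℕ :=
  {v | ∃ i : Fin n, IsPeak w i ∧ v = (w i).val + 1}

/-- `p_S(n)`: the number of permutations in `S_n` with pinnacle set `S`. -/
noncomputable def pcount (n : ℕ) (S : Set ℕ) : ℕ :=
  Nat.card {w : Equiv.Perm (Fin n) // Pin w = S}

/-- `S` is an admissible pinnacle set. -/
def Admissible (S : Finset ℕ) : Prop :=
  ∃ (n : ℕ) (w : Equiv.Perm (Fin n)), Pin w = ↑S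

namespace PinAux

open Equiv Fin

variable {k n : ℕ}

/-- The value of `w` at position `a`, as a plain natural number. -/
def pv {n : ℕ} (w : Perm (Fin n)) (a : ℕ) : ℕ :=
  if h : a < n then (w ⟨a, h⟩).val else 0

lemma pv_eq (w : Perm (Fin n)) (a : ℕ) (h : a < n) : pv w a = (w ⟨a, h⟩).val := dif_pos h

lemma pv_eq' (w : Perm (Fin n)) (i : Fin n) : pv w i.val = (w i).val := pv_eq w i.val i.isLt

lemma pv_lt (w : Perm (Fin n)) (a : ℕ) (h : a < n) : pv w a < n := by
  rw [pv_eq w a h]; exact (w _).isLt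

lemma isPeak_iff (w : Perm (Fin n)) (i : Fin n) :
    IsPeak w i ↔ 0 < i.val ∧ i.val + 1 < n ∧
      pv w (i.val - 1) < pv w i.val ∧ pv w (i.val + 1) < pv w i.val := by
  constructor
  · rintro ⟨h0, h1, hl, hr⟩
    rw [Fin.lt_def] at hl hr
    refine ⟨h0, h1, ?_, ?_⟩
    · rw [pv_eq w _ (by omega), pv_eq' w i]; exact hl
    · rw [pv_eq w _ h1, pv_eq' w i]; exact hr
  · rintro ⟨h0, h1, hl, hr⟩
    rw [pv_eq w _ (by omega), pv_eq' w i] at hl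
    rw [pv_eq w _ h1, pv_eq' w i] at hr
    exact ⟨h0, h1, hl, hr⟩

lemma mem_Pin_iff (w : Perm (Fin n)) (v : ℕ) :
    v ∈ Pin w ↔ ∃ a : ℕ, 0 < a ∧ a + 1 < n ∧
      pv w (a - 1) < pv w a ∧ pv w (a + 1) < pv w a ∧ v = pv w a + 1 := by
  constructor
  · rintro ⟨i, hp, rfl⟩
    rw [isPeak_iff] at hp
    exact ⟨i.val, hp.1, hp.2.1, hp.2.2.1, hp.2.2.2, by rw [pv_eq' w i]⟩
  · rintro ⟨a, h0, h1, hl, hr, rfl⟩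
    refine ⟨⟨a, by omega⟩, ?_, ?_⟩
    · rw [isPeak_iff]
      exact ⟨h0, h1, hl, hr⟩
    · rw [pv_eq w a (by omega)]

/-- Insert the top value at the front. -/
def prependTop (w : Perm (Fin k)) : Perm (Fin (k + 1)) where
  toFun := Fin.cases (Fin.last k) (fun i => (w i).castSucc)
  invFun := Fin.lastCases 0 (fun j => (w.symm j).succ)
  left_inv := by
    intro x
    induction x using Fin.cases with
    | zero => simp
    | succ i => simp
  right_inv := by
    intro y
    induction y using Fin.lastCases with
    | last => simp
    | cast j => simp

/-- Insert the top value at the back. -/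
def appendTop (w : Perm (Fin k)) : Perm (Fin (k + 1)) where
  toFun := Fin.lastCases (Fin.last k) (fun j => (w j).castSucc)
  invFun := Fin.lastCases (Fin.last k) (fun j => (w.symm j).castSucc)
  left_inv := by
    intro x
    induction x using Fin.lastCases with
    | last => simp
    | cast j => simp
  right_inv := by
    intro y
    induction y using Fin.lastCases with
    | last => simp
    | cast j => simp

@[simp] lemma prependTop_zero (w : Perm (Fin k)) : prependTop w 0 = Fin.last k := rfl

@[simp] lemma prependTop_succ (w : Perm (Fin k)) (i : Fin k) :
    prependTop w i.succ = (w i).castSucc := by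
  simp [prependTop]

@[simp] lemma appendTop_last (w : Perm (Fin k)) : appendTop w (Fin.last k) = Fin.last k := by
  simp [appendTop]

@[simp] lemma appendTop_castSucc (w : Perm (Fin k)) (i : Fin k) :
    appendTop w i.castSucc = (w i).castSucc := by
  simp [appendTop]

lemma pv_prependTop (w : Perm (Fin k)) (a : ℕ) (h0 : 0 < a) (h : a < k + 1) :
    pv (prependTop w) a = pv w (a - 1) := by
  obtain ⟨b, rfl⟩ : ∃ b, a = b + 1 := ⟨a - 1, by omega⟩
  rw [pv_eq _ _ h, pv_eq w _ (by omega)]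
  have e : (⟨b + 1, h⟩ : Fin (k + 1)) = Fin.succ ⟨b, by omega⟩ := rfl
  rw [e, prependTop_succ]
  rfl

lemma pv_prependTop_zero (w : Perm (Fin k)) : pv (prependTop w) 0 = k := by
  rw [pv_eq _ _ (by omega)]
  have e : (⟨0, by omega⟩ : Fin (k + 1)) = 0 := by apply Fin.ext; simp
  rw [e, prependTop_zero]
  rfl

lemma pv_appendTop (w : Perm (Fin k)) (a : ℕ) (h : a < k) :
    pv (appendTop w) a = pv w a := by
  rw [pv_eq _ _ (by omega), pv_eq w _ h]
  have e : (⟨a, by omega⟩ : Fin (k + 1)) = Fin.castSucc ⟨a, h⟩ := rfl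
  rw [e, appendTop_castSucc]
  rfl

lemma pv_appendTop_last (w : Perm (Fin k)) : pv (appendTop w) k = k := by
  rw [pv_eq _ _ (by omega)]
  have e : (⟨k, by omega⟩ : Fin (k + 1)) = Fin.last k := rfl
  rw [e, appendTop_last]
  rfl

lemma Pin_prependTop (w : Perm (Fin k)) : Pin (prependTop w) = Pin w := by
  ext v
  rw [mem_Pin_iff, mem_Pin_iff]
  constructor
  · rintro ⟨a, h0, h1, hl, hr, rfl⟩
    have h2 : 2 ≤ a := by
      by_contra hc
      have ha : a = 1 := by omega
      subst ha
      have hl' : pv (prependTop w) 0 < pv (prependTop w) 1 := by simpa using hl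
      rw [pv_prependTop_zero, pv_prependTop w 1 (by omega) (by omega)] at hl'
      have := pv_lt w (1 - 1) (by omega)
      omega
    refine ⟨a - 1, by omega, by omega, ?_, ?_, ?_⟩
    · rw [pv_prependTop w (a - 1) (by omega) (by omega),
        pv_prependTop w a (by omega) (by omega)] at hl
      exact hl
    · rw [pv_prependTop w (a + 1) (by omega) (by omega),
        pv_prependTop w a (by omega) (by omega)] at hr
      rw [show a - 1 + 1 = a + 1 - 1 by omega]
      exact hr
    · rw [pv_prependTop w a (by omega) (by omega)]
  · rintro ⟨a, h0, h1, hl, hr, rfl⟩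
    refine ⟨a + 1, by omega, by omega, ?_, ?_, ?_⟩
    · rw [pv_prependTop w (a + 1 - 1) (by omega) (by omega),
        pv_prependTop w (a + 1) (by omega) (by omega)]
      rw [show a + 1 - 1 - 1 = a - 1 by omega, show a + 1 - 1 = a by omega]
      exact hl
    · rw [pv_prependTop w (a + 1 + 1) (by omega) (by omega),
        pv_prependTop w (a + 1) (by omega) (by omega)]
      rw [show a + 1 + 1 - 1 = a + 1 by omega, show a + 1 - 1 = a by omega]
      exact hr
    · rw [pv_prependTop w (a + 1) (by omega) (by omega),
        show a + 1 - 1 = a by omega]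

lemma Pin_appendTop (w : Perm (Fin k)) : Pin (appendTop w) = Pin w := by
  ext v
  rw [mem_Pin_iff, mem_Pin_iff]
  constructor
  · rintro ⟨a, h0, h1, hl, hr, rfl⟩
    have hak : a < k := by omega
    have h2 : a + 1 < k := by
      by_contra hc
      have ha : a + 1 = k := by omega
      rw [ha, pv_appendTop_last] at hr
      rw [pv_appendTop w a hak] at hr
      have := pv_lt w a hak
      omega
    refine ⟨a, h0, h2, ?_, ?_, ?_⟩
    · rw [pv_appendTop w (a - 1) (by omega), pv_appendTop w a hak] at hl
      exact hl
    · rw [pv_appendTop w (a + 1) h2, pv_appendTop w a hak] at hr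
      exact hr
    · rw [pv_appendTop w a hak]
  · rintro ⟨a, h0, h1, hl, hr, rfl⟩
    refine ⟨a, h0, by omega, ?_, ?_, ?_⟩
    · rw [pv_appendTop w (a - 1) (by omega), pv_appendTop w a (by omega)]
      exact hl
    · rw [pv_appendTop w (a + 1) h1, pv_appendTop w a (by omega)]
      exact hr
    · rw [pv_appendTop w a (by omega)]

/-- Inverse construction when the top value is first. -/
def fromPrepend (u : Perm (Fin (k + 1))) (h : u 0 = Fin.last k) : Perm (Fin k) where
  toFun i := (u i.succ).castPred (fun he => (Fin.succ_ne_zero i) (u.injective (he.trans h.symm)))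
  invFun j := (u.symm j.castSucc).pred (fun he => by
    have hj : j.castSucc = u 0 := by rw [← he, Equiv.apply_symm_apply]
    rw [h] at hj
    exact (Fin.castSucc_lt_last j).ne hj)
  left_inv := by
    intro i
    simp [Fin.castSucc_castPred]
  right_inv := by
    intro j
    simp [Fin.succ_pred]

/-- Inverse construction when the top value is last. -/
def fromAppend (u : Perm (Fin (k + 1))) (h : u (Fin.last k) = Fin.last k) : Perm (Fin k) where
  toFun i := (u i.castSucc).castPred (fun he => by
    have hi : i.castSucc = Fin.last k := by
      have h2 := congrArg u.symm he
      rwa [Equiv.symm_apply_apply, ← h, Equiv.symm_apply_apply] at h2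
    exact (Fin.castSucc_lt_last i).ne hi)
  invFun j := (u.symm j.castSucc).castPred (fun he => by
    have hj : j.castSucc = Fin.last k := by
      have h2 := congrArg u he
      rwa [Equiv.apply_symm_apply, h] at h2
    exact (Fin.castSucc_lt_last j).ne hj)
  left_inv := by
    intro i
    simp [Fin.castSucc_castPred]
  right_inv := by
    intro j
    simp [Fin.castSucc_castPred]

lemma prepend_fromPrepend (u : Perm (Fin (k + 1))) (h : u 0 = Fin.last k) :
    prependTop (fromPrepend u h) = u := by
  apply Equiv.ext
  intro x
  induction x using Fin.cases with
  | zero => rw [prependTop_zero, h]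
  | succ i =>
    rw [prependTop_succ]
    show ((fromPrepend u h) i).castSucc = u i.succ
    simp [fromPrepend, Fin.castSucc_castPred]

lemma append_fromAppend (u : Perm (Fin (k + 1))) (h : u (Fin.last k) = Fin.last k) :
    appendTop (fromAppend u h) = u := by
  apply Equiv.ext
  intro x
  induction x using Fin.lastCases with
  | last => rw [appendTop_last, h]
  | cast i =>
    rw [appendTop_castSucc]
    show ((fromAppend u h) i).castSucc = u i.castSucc
    simp [fromAppend, Fin.castSucc_castPred]

lemma step (k : ℕ) (hk : 1 ≤ k) (S : Set ℕ) (hmax : ∀ v ∈ S, v ≤ k) :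
    pcount (k + 1) S = 2 * pcount k S := by
  have key : ∀ (b : Bool) (w : Perm (Fin k)), Pin w = S →
      Pin (if b then appendTop w else prependTop w) = S := by
    intro b w hw
    cases b <;> simp [Pin_prependTop, Pin_appendTop, hw]
  let F : Bool × {w : Perm (Fin k) // Pin w = S} → {u : Perm (Fin (k + 1)) // Pin u = S} :=
    fun p => ⟨if p.1 then appendTop p.2.1 else prependTop p.2.1, key p.1 p.2.1 p.2.2⟩
  have hz : (0 : Fin (k + 1)) = Fin.castSucc (⟨0, hk⟩ : Fin k) := by apply Fin.ext; simp
  have hFbij : Function.Bijective F := by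
    constructor
    · rintro ⟨b, w, hw⟩ ⟨b', w', hw'⟩ hF
      have heq : (if b then appendTop w else prependTop w)
          = (if b' then appendTop w' else prependTop w') := congrArg Subtype.val hF
      have hbb : b = b' := by
        by_contra hne
        have hdis : ∀ (x y : Perm (Fin k)), appendTop x ≠ prependTop y := by
          intro x y hxy
          have h1 : appendTop x 0 = prependTop y 0 := by rw [hxy]
          rw [prependTop_zero, hz, appendTop_castSucc] at h1
          exact (Fin.castSucc_lt_last _).ne h1
        have hdis2 : ∀ (x y : Perm (Fin k)), prependTop x ≠ appendTop y :=
          fun x y h => hdis y x h.symm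
        cases b <;> cases b' <;> simp_all
      subst hbb
      have hww : w = w' := by
        cases b <;> simp only [if_true, if_false, Bool.false_eq_true] at heq
        · apply Equiv.ext; intro i
          have h2 : prependTop w i.succ = prependTop w' i.succ := by rw [heq]
          rw [prependTop_succ, prependTop_succ] at h2
          exact Fin.castSucc_injective _ h2
        · apply Equiv.ext; intro i
          have h2 : appendTop w i.castSucc = appendTop w' i.castSucc := by rw [heq]
          rw [appendTop_castSucc, appendTop_castSucc] at h2
          exact Fin.castSucc_injective _ h2
      subst hww
      rfl
    · rintro ⟨u, hu⟩
      have hcases : u.symm (Fin.last k) = 0 ∨ u.symm (Fin.last k) = Fin.last k := by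
        by_contra hcon
        push_neg at hcon
        obtain ⟨h1, h2⟩ := hcon
        set p := u.symm (Fin.last k) with hp
        have hp0 : 0 < p.val := by
          rcases Nat.eq_zero_or_pos p.val with h | h
          · exact absurd (Fin.ext h) h1
          · exact h
        have hpk : p.val < k := by
          have hlt := p.isLt
          rcases Nat.lt_or_ge p.val k with h | h
          · exact h
          · exact absurd (Fin.ext (show p.val = (Fin.last k).val by simp; omega)) h2
        have hup : u p = Fin.last k := u.apply_symm_apply _
        have hpvp : pv u p.val = k := by
          rw [pv_eq' u p, hup]; rfl
        have hnb : ∀ (b : ℕ) (hb : b < k + 1), b ≠ p.val → pv u b < k := by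
          intro b hb hbp
          rw [pv_eq u b hb]
          have hne : (⟨b, hb⟩ : Fin (k + 1)) ≠ p := fun he => hbp (by rw [← he])
          have hne2 : u ⟨b, hb⟩ ≠ Fin.last k := fun he =>
            hne (u.injective (he.trans hup.symm))
          have hv1 := (u ⟨b, hb⟩).isLt
          have hv2 : (u ⟨b, hb⟩).val ≠ k := fun hv => hne2 (Fin.ext (by simp [hv]))
          omega
        have hmem : (k + 1) ∈ Pin u := by
          rw [mem_Pin_iff]
          refine ⟨p.val, hp0, by omega, ?_, ?_, by rw [hpvp]⟩
          · have := hnb (p.val - 1) (by omega) (by omega)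
            omega
          · have := hnb (p.val + 1) (by omega) (by omega)
            omega
        rw [hu] at hmem
        have := hmax _ hmem
        omega
      rcases hcases with hc | hc
      · have h0 : u 0 = Fin.last k := by rw [← hc, Equiv.apply_symm_apply]
        refine ⟨(false, ⟨fromPrepend u h0, ?_⟩), ?_⟩
        · rw [← Pin_prependTop (fromPrepend u h0), prepend_fromPrepend, hu]
        · apply Subtype.ext
          show (if false then appendTop (fromPrepend u h0)
            else prependTop (fromPrepend u h0)) = u
          simp [prepend_fromPrepend]
      · have h0 : u (Fin.last k) = Fin.last k := by
          conv_lhs => rw [← hc]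
          exact u.apply_symm_apply _
        refine ⟨(true, ⟨fromAppend u h0, ?_⟩), ?_⟩
        · rw [← Pin_appendTop (fromAppend u h0), append_fromAppend, hu]
        · apply Subtype.ext
          show (if true then appendTop (fromAppend u h0)
            else prependTop (fromAppend u h0)) = u
          simp [append_fromAppend]
  have e := (Equiv.ofBijective F hFbij).symm
  rw [pcount, Nat.card_congr e, Nat.card_prod]
  simp [pcount, Nat.card_eq_fintype_card]

end PinAux

theorem pcount_reduction (n t : ℕ) (S : Finset ℕ) (hS : S.Nonempty)
    (hadm : ∃ w : Equiv.Perm (Fin n), Pin w = ↑S)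
    (ht : S.max' hS ≤ t) (htn : t ≤ n) :
    pcount n ↑S = 2 ^ (n - t) * pcount t ↑S := by
  obtain ⟨w, hw⟩ := hadm
  have hpos : 1 ≤ S.max' hS := by
    have hmem : (S.max' hS : ℕ) ∈ (↑S : Set ℕ) := Finset.mem_coe.mpr (S.max'_mem hS)
    rw [← hw] at hmem
    obtain ⟨i, _, hv⟩ := hmem
    omega
  have ht1 : 1 ≤ t := le_trans hpos ht
  clear hw w
  induction n, htn using Nat.le_induction with
  | base => simp
  | succ m hm IH =>
    have hstep := PinAux.step m (le_trans ht1 hm) (↑S) (by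
      intro v hv
      have hvm : v ≤ S.max' hS := S.le_max' v (Finset.mem_coe.mp hv)
      omega)
    rw [hstep, IH]
    rw [show m + 1 - t = (m - t) + 1 by omega, pow_succ]
    ring
end

section
/- If S ⊆ [n] is the pinnacle set of some permutation in S_n (with n ∈ S or not), then S is also the pinnacle set of some permutation in S_{n+1}. -/
theorem admissible_stable (n : ℕ) (S : Set ℕ)
    (h : ∃ w : Equiv.Perm (Fin n), Pin w = S) :
    ∃ w : Equiv.Perm (Fin (n + 1)), Pin w = S := by
  obtain ⟨w, hw⟩ := h
  set w' : Equiv.Perm (Fin (n+1)) :=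
    (finSuccEquivLast (n := n)).symm.permCongr (Equiv.optionCongr w) with hw'def
  have hcast : ∀ j : Fin n, w' (Fin.castSucc j) = Fin.castSucc (w j) := by
    intro j
    simp [hw'def, Equiv.permCongr_apply]
  have hlast : w' (Fin.last n) = Fin.last n := by
    simp [hw'def, Equiv.permCongr_apply]
  refine ⟨w', ?_⟩
  rw [← hw]
  ext v
  constructor
  · rintro ⟨i, ⟨hpos, hlt, h1, h2⟩, rfl⟩
    have hi1 : i.val + 1 < n := by
      rcases Nat.lt_or_ge (i.val + 1) n with h' | h'
      · exact h'
      · exfalso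
        have he : (⟨i.val + 1, hlt⟩ : Fin (n+1)) = Fin.last n := by
          ext; simp [Fin.last]; omega
        rw [he, hlast] at h2
        exact absurd h2 (not_lt.mpr (Fin.le_last _))
    set j : Fin n := ⟨i.val, by omega⟩ with hj
    have hij : i = Fin.castSucc j := by ext; simp [hj]
    have hL : (⟨i.val - 1, Nat.lt_of_le_of_lt (Nat.sub_le _ _) i.isLt⟩ : Fin (n+1))
        = Fin.castSucc ⟨i.val - 1, by omega⟩ := by ext; simp
    have hR : (⟨i.val + 1, hlt⟩ : Fin (n+1)) = Fin.castSucc ⟨i.val + 1, hi1⟩ := by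
      ext; simp
    have hwi : w' i = Fin.castSucc (w j) := by rw [hij]; exact hcast j
    rw [hL, hcast, hwi] at h1
    rw [hR, hcast, hwi] at h2
    refine ⟨j, ⟨hpos, hi1, ?_, ?_⟩, ?_⟩
    · exact (Fin.castSucc_lt_castSucc_iff).mp h1
    · exact (Fin.castSucc_lt_castSucc_iff).mp h2
    · rw [hwi]; simp
  · rintro ⟨j, ⟨hpos, hlt, h1, h2⟩, rfl⟩
    set i : Fin (n+1) := Fin.castSucc j with hi
    refine ⟨i, ⟨hpos, by simp only [hi, Fin.coe_castSucc]; omega, ?_, ?_⟩, ?_⟩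
    · have hL : (⟨i.val - 1, Nat.lt_of_le_of_lt (Nat.sub_le _ _) i.isLt⟩ : Fin (n+1))
          = Fin.castSucc ⟨j.val - 1, by omega⟩ := by ext; simp [hi]
      rw [hL, hi, hcast, hcast]
      exact Fin.castSucc_lt_castSucc_iff.mpr h1
    · have hR : (⟨i.val + 1, by simp only [hi, Fin.coe_castSucc]; omega⟩ : Fin (n+1))
          = Fin.castSucc ⟨j.val + 1, hlt⟩ := by ext; simp [hi]
      rw [hR, hi, hcast, hcast]
      exact Fin.castSucc_lt_castSucc_iff.mpr h2
    · rw [hi, hcast]; simp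
end

section
/- If a nonempty set S with maximum element m is the pinnacle set of some permutation in S_n for some n ≥ m, then S is the pinnacle set of some permutation in S_m. -/
lemma pin_delete_left {n : ℕ} (w : Equiv.Perm (Fin (n+1))) (hw : (w 0).val = n) :
    ∃ w' : Equiv.Perm (Fin n), Pin w' = Pin w := by
  have hvlt : ∀ j : Fin n, (w j.succ).val < n := by
    intro j
    have h1 : (w j.succ).val < n + 1 := (w j.succ).isLt
    rcases Nat.lt_or_ge (w j.succ).val n with h | h
    · exact h
    · have he : w j.succ = w 0 :=
        Fin.ext ((Nat.le_antisymm (Nat.lt_succ_iff.mp h1) h).trans hw.symm)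
      exact absurd (w.injective he) (Fin.succ_ne_zero j)
  let g : Fin n → Fin n := fun j => ⟨(w j.succ).val, hvlt j⟩
  have ginj : Function.Injective g := by
    intro a b hab
    have : (w a.succ).val = (w b.succ).val := by simpa [g, Fin.ext_iff] using hab
    exact Fin.succ_injective _ (w.injective (Fin.ext this))
  refine ⟨Equiv.ofBijective g (Finite.injective_iff_bijective.mp ginj), ?_⟩
  ext v
  simp only [Pin, Set.mem_setOf_eq]
  constructor
  · rintro ⟨i, ⟨hi0, hin, hl, hr⟩, rfl⟩
    refine ⟨⟨i.val + 1, by omega⟩, ⟨Nat.succ_pos _, ⟨by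
      show i.val + 1 + 1 < n + 1; omega, ?_, ?_⟩⟩, ?_⟩
    · have hl' : (w ((⟨i.val - 1, by omega⟩ : Fin n).succ)).val < (w i.succ).val := hl
      have e1 : ((⟨i.val - 1, by omega⟩ : Fin n).succ) = (⟨i.val, by omega⟩ : Fin (n+1)) :=
        Fin.ext (show i.val - 1 + 1 = i.val by omega)
      rw [e1] at hl'
      exact hl'
    · exact hr
    · rfl
  · rintro ⟨j, ⟨hj0, hjn, hl, hr⟩, rfl⟩
    have hj2 : 2 ≤ j.val := by
      by_contra hc
      have hj1 : j.val = 1 := by omega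
      have e0 : (⟨j.val - 1, Nat.lt_of_le_of_lt (Nat.sub_le _ _) j.isLt⟩ : Fin (n+1)) = 0 :=
        Fin.ext (show j.val - 1 = 0 by omega)
      rw [e0] at hl
      have hne : w j ≠ w 0 := by
        intro h
        have h0 : j = 0 := w.injective h
        rw [h0] at hj1
        simp at hj1
      have hlt : (w j).val < n + 1 := (w j).isLt
      have hne' : (w j).val ≠ n := fun h => hne (Fin.ext (h.trans hw.symm))
      have hl' : (w 0).val < (w j).val := hl
      omega
    have hjln : j.val - 1 < n := by omega
    refine ⟨⟨j.val - 1, hjln⟩, ⟨show 0 < j.val - 1 by omega, ⟨by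
      show j.val - 1 + 1 < n; omega, ?_, ?_⟩⟩, ?_⟩
    · have e1 : ((⟨j.val - 1 - 1, by omega⟩ : Fin n).succ)
          = (⟨j.val - 1, Nat.lt_of_le_of_lt (Nat.sub_le _ _) j.isLt⟩ : Fin (n+1)) :=
        Fin.ext (show j.val - 1 - 1 + 1 = j.val - 1 by omega)
      have e2 : ((⟨j.val - 1, hjln⟩ : Fin n).succ) = j :=
        Fin.ext (show j.val - 1 + 1 = j.val by omega)
      show (w ((⟨j.val - 1 - 1, by omega⟩ : Fin n).succ)).val
          < (w ((⟨j.val - 1, hjln⟩ : Fin n).succ)).val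
      rw [e1, e2]
      exact hl
    · have e3 : ((⟨j.val - 1 + 1, by omega⟩ : Fin n).succ) = (⟨j.val + 1, hjn⟩ : Fin (n+1)) :=
        Fin.ext (show j.val - 1 + 1 + 1 = j.val + 1 by omega)
      have e2 : ((⟨j.val - 1, hjln⟩ : Fin n).succ) = j :=
        Fin.ext (show j.val - 1 + 1 = j.val by omega)
      show (w ((⟨j.val - 1 + 1, by omega⟩ : Fin n).succ)).val
          < (w ((⟨j.val - 1, hjln⟩ : Fin n).succ)).val
      rw [e3, e2]
      exact hr
    · have e2 : ((⟨j.val - 1, hjln⟩ : Fin n).succ) = j :=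
        Fin.ext (show j.val - 1 + 1 = j.val by omega)
      show (w j).val + 1 = (w ((⟨j.val - 1, hjln⟩ : Fin n).succ)).val + 1
      rw [e2]

lemma pin_delete_right {n : ℕ} (w : Equiv.Perm (Fin (n+1))) (hw : (w (Fin.last n)).val = n) :
    ∃ w' : Equiv.Perm (Fin n), Pin w' = Pin w := by
  have hvlt : ∀ j : Fin n, (w j.castSucc).val < n := by
    intro j
    have h1 : (w j.castSucc).val < n + 1 := (w j.castSucc).isLt
    rcases Nat.lt_or_ge (w j.castSucc).val n with h | h
    · exact h
    · have he : w j.castSucc = w (Fin.last n) :=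
        Fin.ext ((Nat.le_antisymm (Nat.lt_succ_iff.mp h1) h).trans hw.symm)
      have := w.injective he
      exact absurd this (Fin.ne_of_lt (Fin.castSucc_lt_last j))
  let g : Fin n → Fin n := fun j => ⟨(w j.castSucc).val, hvlt j⟩
  have ginj : Function.Injective g := by
    intro a b hab
    have : (w a.castSucc).val = (w b.castSucc).val := by simpa [g, Fin.ext_iff] using hab
    exact Fin.castSucc_injective _ (w.injective (Fin.ext this))
  refine ⟨Equiv.ofBijective g (Finite.injective_iff_bijective.mp ginj), ?_⟩
  ext v
  simp only [Pin, Set.mem_setOf_eq]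
  constructor
  · rintro ⟨i, ⟨hi0, hin, hl, hr⟩, rfl⟩
    refine ⟨⟨i.val, by omega⟩, ⟨hi0, ⟨by show i.val + 1 < n + 1; omega, ?_, ?_⟩⟩, ?_⟩
    · exact hl
    · exact hr
    · rfl
  · rintro ⟨j, ⟨hj0, hjn, hl, hr⟩, rfl⟩
    have hjn' : j.val + 1 < n := by
      rcases Nat.lt_or_ge (j.val + 1) n with h | h
      · exact h
      · exfalso
        have hje : j.val + 1 = n := by omega
        have e0 : (⟨j.val + 1, hjn⟩ : Fin (n+1)) = Fin.last n :=
          Fin.ext (show j.val + 1 = n from hje)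
        rw [e0] at hr
        have hne : w j ≠ w (Fin.last n) := by
          intro h'
          have h0 : j = Fin.last n := w.injective h'
          have : j.val = n := congrArg Fin.val h0
          omega
        have hlt : (w j).val < n + 1 := (w j).isLt
        have hne' : (w j).val ≠ n := fun h' => hne (Fin.ext (h'.trans hw.symm))
        have hr' : (w (Fin.last n)).val < (w j).val := hr
        omega
    refine ⟨⟨j.val, by omega⟩, ⟨hj0, ⟨by show j.val + 1 < n; omega, ?_, ?_⟩⟩, ?_⟩
    · exact hl
    · exact hr
    · rfl

theorem admissible_reduce_to_max (n : ℕ) (S : Finset ℕ) (hS : S.Nonempty)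
    (hn : S.max' hS ≤ n)
    (h : ∃ w : Equiv.Perm (Fin n), Pin w = ↑S) :
    ∃ w : Equiv.Perm (Fin (S.max' hS)), Pin w = ↑S := by
  set m := S.max' hS with hm
  clear_value m
  induction n, hn using Nat.le_induction with
  | base => exact h
  | succ n hmn ih =>
    obtain ⟨w, hw⟩ := h
    set p := w.symm ⟨n, Nat.lt_succ_self n⟩ with hp
    have hwp : w p = ⟨n, Nat.lt_succ_self n⟩ := w.apply_symm_apply _
    have hlt : ∀ q : Fin (n+1), q ≠ p → w q < w p := by
      intro q hq
      have h1 : (w q).val < n + 1 := (w q).isLt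
      have h2 : (w q).val ≠ n := by
        intro h'
        have : w q = w p := by rw [hwp]; exact Fin.ext h'
        exact hq (w.injective this)
      have h3 : (w p).val = n := by rw [hwp]
      show (w q).val < (w p).val
      omega
    have hcases : p.val = 0 ∨ p.val = n := by
      by_contra hc
      push_neg at hc
      have h0 : 0 < p.val := Nat.pos_of_ne_zero hc.1
      have h1 : p.val + 1 < n + 1 := by
        have := p.isLt
        omega
      have peak : IsPeak w p := by
        refine ⟨h0, h1, ?_, ?_⟩
        · apply hlt
          intro h'
          have : p.val - 1 = p.val := congrArg Fin.val h'
          omega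
        · apply hlt
          intro h'
          have : p.val + 1 = p.val := congrArg Fin.val h'
          omega
      have hmem : (n + 1) ∈ Pin w := ⟨p, peak, by rw [hwp]⟩
      rw [hw] at hmem
      have : (n + 1) ≤ m := hm ▸ S.le_max' _ (by exact_mod_cast hmem)
      omega
    rcases hcases with h0 | hlast
    · have hw0 : (w 0).val = n := by
        have : (0 : Fin (n+1)) = p := Fin.ext h0.symm
        rw [this, hwp]
      obtain ⟨w', hw'⟩ := pin_delete_left w hw0
      exact ih ⟨w', hw'.trans hw⟩
    · have hwl : (w (Fin.last n)).val = n := by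
        have : Fin.last n = p := Fin.ext hlast.symm
        rw [this, hwp]
      obtain ⟨w', hw'⟩ := pin_delete_right w hwl
      exact ih ⟨w', hw'.trans hw⟩
end

section
/- A finite nonempty set S of positive integers with maximum element m is an admissible pinnacle set if and only if S \ {m} is an admissible pinnacle set and m > 2|S|. -/
open Finset

section Rank

variable {α β : Type*} [LinearOrder α] [LinearOrder β]

theorem lt_of_card_filter_lt_card_filter (C : Finset α) {a b : α}
    (h : #{z ∈ C | z < a} < #{z ∈ C | z < b}) : a < b := by
  contrapose! h
  exact card_le_card fun z => by
    simp only [mem_filter]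
    exact And.imp_right fun hz => hz.trans_le h

theorem Equiv.card_filter_lt_apply (e : α ≃ β) {A : Finset α} {B : Finset β}
    (hAB : ∀ x, e x ∈ B ↔ x ∈ A) (hmono : StrictMonoOn e A) {x : α} (hx : x ∈ A) :
    #{z ∈ B | z < e x} = #{y ∈ A | y < x} := by
  refine (card_bij (fun y _ => e y) ?_ ?_ ?_).symm
  · intro y hy
    rw [mem_filter] at hy ⊢
    exact ⟨(hAB y).2 hy.1, hmono hy.1 hx hy.2⟩
  · intro y₁ _ y₂ _ h
    exact e.injective h
  · intro z hz
    rw [mem_filter] at hz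
    refine ⟨e.symm z, ?_, e.apply_symm_apply z⟩
    have hzA : e.symm z ∈ A := (hAB _).1 (by simpa using hz.1)
    rw [mem_filter]
    exact ⟨hzA, (hmono.lt_iff_lt hzA hx).1 (by simpa using hz.2)⟩

theorem Equiv.apply_lt_of_card_filter_lt (e : α ≃ β) {A : Finset α} {B : Finset β}
    (hAB : ∀ x, e x ∈ B ↔ x ∈ A) (hmono : StrictMonoOn e A) {x : α} (hx : x ∈ A) {b : β}
    (h : #{y ∈ A | y < x} < #{z ∈ B | z < b}) : e x < b :=
  lt_of_card_filter_lt_card_filter B (e.card_filter_lt_apply hAB hmono hx ▸ h)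

theorem card_filter_lt_max' (S : Finset α) (hS : S.Nonempty) :
    #{t ∈ S | t < S.max' hS} = #S - 1 := by
  rw [← card_erase_of_mem (S.max'_mem hS)]
  congr 1
  ext t
  simp only [mem_filter, mem_erase]
  exact ⟨fun h => ⟨h.2.ne, h.1⟩, fun h => ⟨h.2, (S.le_max' t h.2).lt_of_ne h.1⟩⟩

variable [Fintype α]

theorem card_filter_lt_add_card_filter_compl_lt [DecidableEq α] (X : Finset α) (x : α) :
    #{y ∈ X | y < x} + #{y ∈ Xᶜ | y < x} = #{y | y < x} := by
  rw [← card_filter_add_card_filter_not (s := {y | y < x}) (· ∈ X), filter_filter, filter_filter]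
  congr 2 <;> ext y <;> simp [and_comm]

theorem exists_perm_mem_iff_strictMonoOn (A B : Finset α) (h : #A = #B) :
    ∃ w : Equiv.Perm α, (∀ x, w x ∈ B ↔ x ∈ A) ∧ StrictMonoOn w A ∧ StrictMonoOn w ↑Aᶜ := by
  have hc : #Aᶜ = #Bᶜ := by rw [card_compl, card_compl, h]
  let e : A ≃o B := (A.orderIsoOfFin h).symm.trans (B.orderIsoOfFin rfl)
  let f : (Aᶜ : Finset α) ≃o (Bᶜ : Finset α) :=
    (Aᶜ.orderIsoOfFin hc).symm.trans (Bᶜ.orderIsoOfFin rfl)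
  let f' : {x // x ∉ A} ≃ {x // x ∉ B} :=
    ((Equiv.subtypeEquivRight fun x => mem_compl).symm.trans f.toEquiv).trans
      (Equiv.subtypeEquivRight fun x => mem_compl)
  set w := Equiv.subtypeCongr e.toEquiv f'
  have hwA (x : α) (hx : x ∈ A) : w x = e ⟨x, hx⟩ := by
    simp [w, Equiv.subtypeCongr, Equiv.sumCompl, hx]
  have hwAc (x : α) (hx : x ∈ Aᶜ) : w x = f ⟨x, hx⟩ := by
    simp [w, Equiv.subtypeCongr, Equiv.sumCompl, mem_compl.1 hx, f']
    rfl
  refine ⟨w, fun x => ?_, fun x hx y hy hxy => ?_, fun x hx y hy hxy => ?_⟩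
  · by_cases hx : x ∈ A
    · simp [hwA x hx, hx]
    · rw [hwAc x (mem_compl.2 hx)]
      simpa [hx] using mem_compl.1 (f ⟨x, mem_compl.2 hx⟩).2
  · rw [hwA x hx, hwA y hy]
    exact e.strictMono hxy
  · rw [hwAc x hx, hwAc y hy]
    exact f.strictMono hxy

end Rank

open Equiv

section Peaks

variable {n : ℕ}

theorem Fin.card_filter_lt (x : Fin n) : #{y | y < x} = x.val := by
  rw [filter_gt_eq_Iio, Fin.card_Iio]

theorem Equiv.Perm.card_filter_apply_le (w : Perm (Fin n)) (v : Fin n) :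
    #{x | w x ≤ v} = v.val + 1 := by
  rw [← Fin.card_Iic, ← filter_ge_eq_Iic]
  exact card_equiv w fun x => by simp

variable {w : Perm (Fin n)}

theorem isPeak_iff {i : Fin n} :
    IsPeak w i ↔ 0 < i.val ∧ i.val + 1 < n ∧
      ∀ j : Fin n, j.val + 1 = i.val ∨ j.val = i.val + 1 → w j < w i := by
  constructor
  · rintro ⟨hi, hn, hl, hr⟩
    refine ⟨hi, hn, fun j hj => ?_⟩
    rcases hj with hj | hj
    · convert hl using 2; ext; simp; omega
    · convert hr using 2; ext; simp [hj]
  · rintro ⟨hi, hn, h⟩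
    exact ⟨hi, hn, h _ (.inl (by simp; omega)), h _ (.inr rfl)⟩

theorem IsPeak.not_isPeak_of_val_eq_add_one {i j : Fin n} (hi : IsPeak w i)
    (hj : j.val = i.val + 1) : ¬IsPeak w j := fun hj' =>
  (isPeak_iff.1 hi).2.2 j (.inr hj) |>.asymm <| (isPeak_iff.1 hj').2.2 i (.inl hj.symm)

theorem isPeak_iff_mem_of_strictMonoOn_compl {A : Finset (Fin n)} (hmono : StrictMonoOn w ↑Aᶜ)
    (hA : ∀ i ∈ A, IsPeak w i) (i : Fin n) : IsPeak w i ↔ i ∈ A := by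
  refine ⟨fun hi => ?_, hA i⟩
  by_contra hiA
  obtain ⟨-, hn, hlt⟩ := isPeak_iff.1 hi
  set j : Fin n := ⟨i.val + 1, hn⟩
  by_cases hjA : j ∈ A
  · exact hi.not_isPeak_of_val_eq_add_one rfl (hA j hjA)
  · exact (hlt j (.inr rfl)).asymm <|
      hmono (by simpa using hiA) (by simpa using hjA) (Fin.lt_def.2 (by simp [j]))

theorem two_mul_card_le_of_forall_isPeak {P : Finset (Fin n)} (hP : ∀ p ∈ P, IsPeak w p)
    {v : Fin n} (hv : ∀ p ∈ P, w p ≤ v) : 2 * #P ≤ v.val := by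
  rcases P.eq_empty_or_nonempty with rfl | hne
  · simp
  set m := P.max' hne
  obtain ⟨-, hmn, -⟩ := isPeak_iff.1 (hP m (P.max'_mem hne))
  let pred (p : Fin n) : Fin n := ⟨p.val - 1, by omega⟩
  have hpred (p : Fin n) (hp : p ∈ P) : (pred p).val + 1 = p.val := by
    have := (isPeak_iff.1 (hP p hp)).1; simp [pred]; omega
  set L := P.image pred
  set r : Fin n := ⟨m.val + 1, hmn⟩
  have hL : #L = #P := card_image_of_injOn fun p hp q hq h => by
    have := hpred p hp; have := hpred q hq; have := congrArg Fin.val h; ext; omega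
  have hdisj : Disjoint P L := disjoint_left.2 fun p hp hpL => by
    obtain ⟨q, hq, rfl⟩ := mem_image.1 hpL
    exact (hP _ hp).not_isPeak_of_val_eq_add_one (hpred q hq).symm (hP q hq)
  have hr : r ∉ P ∪ L := by
    rw [mem_union, not_or]
    refine ⟨fun hrP => ?_, fun hrL => ?_⟩
    · exact absurd (P.le_max' r hrP) (by simp [Fin.le_def, r, m])
    · obtain ⟨q, hq, hqr⟩ := mem_image.1 hrL
      have := hpred q hq; have := P.le_max' q hq; rw [Fin.le_def] at this
      have := congrArg Fin.val hqr; simp [r] at this; omega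
  have hsub : insert r (P ∪ L) ⊆ ({x | w x ≤ v} : Finset (Fin n)) := by
    intro x hx
    rw [mem_insert, mem_union, mem_image] at hx
    rw [mem_filter_univ]
    rcases hx with rfl | hxP | ⟨p, hp, rfl⟩
    · exact ((isPeak_iff.1 (hP m (P.max'_mem hne))).2.2 r (.inr rfl)).le.trans
        (hv _ (P.max'_mem hne))
    · exact hv x hxP
    · exact ((isPeak_iff.1 (hP p hp)).2.2 _ (.inl (hpred p hp))).le.trans (hv p hp)
  suffices 2 * #P + 1 ≤ v.val + 1 by omega
  calc 2 * #P + 1 = #(insert r (P ∪ L)) := by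
        rw [card_insert_of_notMem hr, card_union_of_disjoint hdisj, hL]; ring
    _ ≤ #{x | w x ≤ v} := card_le_card hsub
    _ = v.val + 1 := w.card_filter_apply_le v

end Peaks

section Construction

variable {n : ℕ}

theorem card_filter_odd_lt {b : ℕ} (hb : b ≤ n) :
    #{i : Fin n | 2 ∣ i.val + 1 ∧ i.val < b} = b / 2 := by
  rw [← Nat.card_multiples b 2, ← card_map Fin.valEmbedding]
  congr 1
  ext m
  simp only [mem_map, mem_filter, mem_univ, true_and, Fin.valEmbedding_apply, mem_range]
  constructor
  · rintro ⟨i, ⟨h1, h2⟩, rfl⟩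
    exact ⟨h2, h1⟩
  · rintro ⟨h1, h2⟩
    exact ⟨⟨m, by omega⟩, ⟨h2, h1⟩, rfl⟩

theorem two_mul_card_le_of_rank_bound {B : Finset (Fin n)}
    (hB : ∀ b ∈ B, 2 * #{c ∈ B | c < b} + 2 ≤ b.val) : 2 * #B ≤ n := by
  rcases B.eq_empty_or_nonempty with rfl | hne
  · simp
  have hmax := hB _ (B.max'_mem hne)
  rw [card_filter_lt_max'] at hmax
  have := card_pos.2 hne
  have := (B.max' hne).isLt
  omega

theorem exists_perm_isPeak_iff (B : Finset (Fin n))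
    (hB : ∀ b ∈ B, 2 * #{c ∈ B | c < b} + 2 ≤ b.val) :
    ∃ w : Perm (Fin n), ∀ i, IsPeak w i ↔ w i ∈ B := by
  set k := #B
  have hk : 2 * k ≤ n := two_mul_card_le_of_rank_bound hB
  -- the positions `1, 3, …, 2k - 1` receive the values of `B`, in increasing order
  set A : Finset (Fin n) := {i | 2 ∣ i.val + 1 ∧ i.val < 2 * k}
  have hrankA (x : Fin n) (hx : x.val ≤ 2 * k) : #{y ∈ A | y < x} = x.val / 2 := by
    rw [← card_filter_odd_lt x.isLt.le, filter_filter]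
    congr 1
    ext y
    simp only [mem_filter_univ, Fin.lt_def]
    omega
  obtain ⟨w, hwB, hmonoA, hmonoAc⟩ :=
    exists_perm_mem_iff_strictMonoOn A B (by rw [card_filter_odd_lt hk]; omega)
  refine ⟨w, fun i => (isPeak_iff_mem_of_strictMonoOn_compl hmonoAc (fun i hi => ?_) i).trans
    (hwB i).symm⟩
  obtain ⟨hodd, hik⟩ : 2 ∣ i.val + 1 ∧ i.val < 2 * k := by simpa [A] using hi
  have hrankB : #{c ∈ B | c < w i} = i.val / 2 := by
    rw [w.card_filter_lt_apply hwB hmonoA hi, hrankA i hik.le]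
  have hwi := hB _ ((hwB i).2 hi)
  rw [hrankB] at hwi
  have hin : i.val + 1 < n := by have := (w i).isLt; omega
  set j : Fin n := ⟨i.val + 1, hin⟩
  have hjA : j ∈ Aᶜ := by simp [A, j]; omega
  have hwj : w j < w i := by
    refine w.apply_lt_of_card_filter_lt (B := Bᶜ) (by simp [hwB]) hmonoAc hjA ?_
    have hsplitA := card_filter_lt_add_card_filter_compl_lt A j
    have hsplitB := card_filter_lt_add_card_filter_compl_lt B (w i)
    rw [hrankA j (by simp [j]; omega), Fin.card_filter_lt] at hsplitA
    rw [hrankB, Fin.card_filter_lt] at hsplitB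
    have hj : j.val = i.val + 1 := rfl
    omega
  refine isPeak_iff.2 ⟨by omega, hin, fun l hl => ?_⟩
  rcases hl with hl | hl
  · have hlA : l ∈ Aᶜ := by simp [A]; omega
    exact (hmonoAc hlA hjA (Fin.lt_def.2 (by simp [j]; omega))).trans hwj
  · rwa [show l = j from Fin.ext hl]

end Construction

def PinnacleBound (S : Finset ℕ) : Prop :=
  ∀ s ∈ S, 2 * #{t ∈ S | t < s} + 2 < s

theorem Admissible.pinnacleBound {S : Finset ℕ} (h : Admissible S) : PinnacleBound S := by
  classical
  obtain ⟨n, w, hw⟩ := h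
  intro s hs
  obtain ⟨i, hi, rfl⟩ : s ∈ Pin w := by rw [hw]; exact hs
  set P : Finset (Fin n) := {p | IsPeak w p ∧ w p < w i}
  have hSP : {t ∈ S | t < (w i).val + 1} = P.image fun p => (w p).val + 1 := by
    ext t
    simp only [mem_filter, mem_image, mem_univ, true_and, P]
    rw [← mem_coe, ← hw]
    constructor
    · rintro ⟨⟨p, hp, rfl⟩, ht⟩
      exact ⟨p, ⟨hp, Fin.lt_def.2 (by omega)⟩, rfl⟩
    · rintro ⟨p, ⟨hp, hpi⟩, rfl⟩
      exact ⟨⟨p, hp, rfl⟩, by rw [Fin.lt_def] at hpi; omega⟩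
  have hinj : Function.Injective fun p => (w p).val + 1 := fun p q hpq =>
    w.injective (Fin.ext (by simpa using hpq))
  have hiP : i ∉ P := by simp [P]
  have hPi := two_mul_card_le_of_forall_isPeak (w := w) (P := insert i P) (v := w i)
    (by simp +contextual [P, hi]) (by simp +contextual [P, le_of_lt])
  rw [card_insert_of_notMem hiP] at hPi
  rw [hSP, card_image_of_injective _ hinj]
  omega

theorem PinnacleBound.admissible {S : Finset ℕ} (h : PinnacleBound S) : Admissible S := by
  set n := S.sup id
  set B : Finset (Fin n) := {v | v.val + 1 ∈ S}
  have hinj : Function.Injective fun v : Fin n => v.val + 1 := fun a b hab =>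
    Fin.ext (by simpa using hab)
  have hSB : B.image (fun v => v.val + 1) = S := by
    ext s
    simp only [mem_image, mem_filter_univ, B]
    refine ⟨by rintro ⟨v, hv, rfl⟩; exact hv, fun hs => ?_⟩
    have := h s hs
    have : s ≤ n := le_sup (f := id) hs
    exact ⟨⟨s - 1, by omega⟩, by simp; rwa [Nat.sub_add_cancel (by omega)], by simp; omega⟩
  obtain ⟨w, hw⟩ := exists_perm_isPeak_iff B fun b hb => by
    have hrank : #{t ∈ S | t < b.val + 1} = #{c ∈ B | c < b} := by
      rw [← hSB, filter_image, card_image_of_injective _ hinj]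
      exact congrArg card (filter_congr fun c _ => by simp only [add_lt_add_iff_right, Fin.lt_def])
    have := h _ (by simpa [B] using hb)
    omega
  refine ⟨n, w, ?_⟩
  ext s
  simp only [Pin, hw, Set.mem_ofPred_eq, ← hSB, coe_image, Set.mem_image, mem_coe]
  constructor
  · rintro ⟨i, hi, rfl⟩
    exact ⟨w i, hi, rfl⟩
  · rintro ⟨v, hv, rfl⟩
    exact ⟨w.symm v, by simpa using hv, by simp⟩

theorem admissible_iff_pinnacleBound {S : Finset ℕ} : Admissible S ↔ PinnacleBound S :=
  ⟨Admissible.pinnacleBound, PinnacleBound.admissible⟩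

theorem pinnacleBound_iff_erase_max' {S : Finset ℕ} (hS : S.Nonempty) :
    PinnacleBound S ↔ PinnacleBound (S.erase (S.max' hS)) ∧ 2 * #S < S.max' hS := by
  set m := S.max' hS
  have hrank {s : ℕ} (hs : s ∈ S.erase m) : #{t ∈ S.erase m | t < s} = #{t ∈ S | t < s} := by
    rw [filter_erase, erase_eq_of_notMem]
    simp only [mem_filter, not_and, not_lt]
    exact fun _ => S.le_max' s (mem_of_mem_erase hs)
  have hm : 2 * #{t ∈ S | t < m} + 2 < m ↔ 2 * #S < m := by
    rw [card_filter_lt_max']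
    have := card_pos.2 hS
    omega
  constructor
  · intro h
    exact ⟨fun s hs => hrank hs ▸ h s (mem_of_mem_erase hs), hm.1 (h m (S.max'_mem hS))⟩
  · rintro ⟨h, hcard⟩ s hs
    rcases eq_or_ne s m with rfl | hsm
    · exact hm.2 hcard
    · exact (hrank (mem_erase.2 ⟨hsm, hs⟩)).symm ▸ h s (mem_erase.2 ⟨hsm, hs⟩)

theorem admissible_characterization_general (S : Finset ℕ) (hS : S.Nonempty) :
    Admissible S ↔ Admissible (S.erase (S.max' hS)) ∧ 2 * S.card < S.max' hS := by
  rw [admissible_iff_pinnacleBound, admissible_iff_pinnacleBound, pinnacleBound_iff_erase_max']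

theorem admissible_characterization (S : Finset ℕ) (hS : S.Nonempty)
    (hpos : ∀ s ∈ S, 0 < s) :
    Admissible S ↔ Admissible (S.erase (S.max' hS)) ∧ 2 * S.card < S.max' hS :=
  admissible_characterization_general S hS
end

section
/- Let S = {s_1 < s_2 < ... < s_d} be an admissible pinnacle set with maximum m = s_d, and let {t_1 < t_2 < ... < t_{m-d}} = [m] \ S. Define w ∈ S_m by w(2j) = s_j and w(2j-1) = t_j for j ≤ d, and w(i) = t_{i-d} for i > 2d. Then Pin(w) = S. -/
/-!
Admissibility forces `s_i > 2i`: in any permutation with pinnacle set `S`, the `i` peaks of value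
at most `s_i`, their left neighbours and the right neighbour of the rightmost of them are `2i + 1`
distinct positions carrying values at most `s_i`. Hence at least `j + 1` non-pinnacles lie below
`s_j`, so in `w` each `s_j` exceeds both its neighbours `t_j` and `t_{j+1}`; at every other
position the next value is larger, since the `t`'s increase and `t_j < s_j`.
-/

open Finset

theorem Finset.sort_getD_eq_nth (S : Finset ℕ) (j : ℕ) :
    (S.sort (· ≤ ·)).getD j 0 = Nat.nth (· ∈ S) j := by
  rw [Nat.nth_eq_getD_sort (p := (· ∈ S)) S.finite_toSet, finite_toSet_toFinset]

theorem count_mem_Icc_sdiff_add_count {S : Finset ℕ} {m : ℕ} (hS : S ⊆ Icc 1 m) {x : ℕ}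
    (hx : x ≤ m + 1) : Nat.count (· ∈ Icc 1 m \ S) x + Nat.count (· ∈ S) x = x - 1 := by
  induction x with
  | zero => simp
  | succ x ih =>
    have hxS : x ∈ S → 1 ≤ x := fun h => (mem_Icc.1 (hS h)).1
    rw [Nat.count_succ, Nat.count_succ]
    split_ifs <;> grind

theorem IsPeak.val_ne_val_add_one {n : ℕ} {w : Equiv.Perm (Fin n)} {p q : Fin n}
    (hp : IsPeak w p) (hq : IsPeak w q) : q.val ≠ p.val + 1 := by
  intro hpq
  obtain ⟨-, hp1, -, hpr⟩ := hp
  obtain ⟨-, -, hql, -⟩ := hq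
  rw [show (⟨q.val - 1, _⟩ : Fin n) = p from Fin.ext (by dsimp only; omega)] at hql
  rw [show (⟨p.val + 1, hp1⟩ : Fin n) = q from Fin.ext hpq.symm] at hpr
  exact hql.asymm hpr

theorem two_mul_card_add_one_le_of_isPeak {n : ℕ} {w : Equiv.Perm (Fin n)} {P : Finset (Fin n)}
    (hP : P.Nonempty) (hpeak : ∀ i ∈ P, IsPeak w i) {c : ℕ}
    (hc : ∀ i ∈ P, (w i).val < c) : 2 * #P + 1 ≤ c := by
  classical
  let left (i : Fin n) : Fin n := ⟨i.val - 1, by omega⟩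
  obtain ⟨-, hlast, -, hright_lt⟩ := hpeak _ (P.max'_mem hP)
  let right : Fin n := ⟨(P.max' hP).val + 1, hlast⟩
  have hleft_inj : Set.InjOn left P := fun i hi j hj hij => by
    have := (hpeak i hi).1
    have := (hpeak j hj).1
    have := congrArg Fin.val hij
    dsimp only [left] at this
    exact Fin.ext (by omega)
  have hdisj : Disjoint P (P.image left) := by
    refine disjoint_left.2 fun i hi hi' => ?_
    obtain ⟨j, hj, rfl⟩ := mem_image.1 hi'
    have := (hpeak j hj).1
    exact (hpeak _ hi).val_ne_val_add_one (hpeak j hj) (by dsimp only [left]; omega)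
  have hright_new : right ∉ P ∪ P.image left := by
    have hmax (i : Fin n) (hi : i ∈ P) : i.val ≤ (P.max' hP).val :=
      Fin.le_def.1 (P.le_max' i hi)
    rw [mem_union, mem_image, not_or, not_exists]
    refine ⟨fun h => ?_, fun j ⟨hj, h⟩ => ?_⟩
    · have := hmax _ h
      dsimp only [right] at this
      omega
    · have := hmax j hj
      have := congrArg Fin.val h
      dsimp only [left, right] at this
      omega
  let Q : Finset (Fin n) := insert right (P ∪ P.image left)
  have hcard : #Q = 2 * #P + 1 := by
    rw [card_insert_of_notMem hright_new, card_union_of_disjoint hdisj,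
      card_image_of_injOn hleft_inj]
    ring
  have hmaps : Set.MapsTo (fun i => (w i).val) Q (range c) := by
    intro i hi
    rw [mem_coe, mem_insert, mem_union, mem_image] at hi
    rw [coe_range, Set.mem_Iio]
    rcases hi with rfl | hi | ⟨j, hj, rfl⟩
    · exact lt_trans hright_lt (hc _ (P.max'_mem hP))
    · exact hc i hi
    · exact lt_trans (hpeak j hj).2.2.1 (hc j hj)
  calc 2 * #P + 1 = #Q := hcard.symm
    _ ≤ #(range c) := card_le_card_of_injOn _ hmaps fun i _ j _ h => w.injective (Fin.ext h)
    _ = c := card_range c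

theorem two_mul_count_succ_lt_of_mem_pin {n : ℕ} {w : Equiv.Perm (Fin n)} {S : Finset ℕ}
    (hw : Pin w = S) {x : ℕ} (hx : x ∈ S) : 2 * Nat.count (· ∈ S) (x + 1) < x := by
  classical
  have hmem (y : ℕ) : y ∈ S ↔ ∃ i, IsPeak w i ∧ y = (w i).val + 1 := by
    rw [← mem_coe, ← hw]; rfl
  let P : Finset (Fin n) := {i | IsPeak w i ∧ (w i).val < x}
  have hcount : #P = Nat.count (· ∈ S) (x + 1) := by
    rw [Nat.count_eq_card_filter_range]
    refine card_nbij (fun i => (w i).val + 1) (fun i hi => ?_)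
      (fun i _ j _ h => w.injective (Fin.ext (by simpa using h))) (fun y hy => ?_)
    · obtain ⟨hpeak, hlt⟩ := (mem_filter.1 hi).2
      exact mem_filter.2 ⟨mem_range.2 (Nat.succ_lt_succ hlt), (hmem _).2 ⟨i, hpeak, rfl⟩⟩
    · obtain ⟨hy, hyS⟩ := mem_filter.1 hy
      obtain ⟨i, hpeak, rfl⟩ := (hmem y).1 hyS
      exact ⟨i, mem_filter.2 ⟨mem_univ i, hpeak, by rw [mem_range] at hy; omega⟩, rfl⟩
  obtain ⟨i, hpeak, rfl⟩ := (hmem x).1 hx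
  have hP : P.Nonempty := ⟨i, mem_filter.2 ⟨mem_univ i, hpeak, by omega⟩⟩
  have := two_mul_card_add_one_le_of_isPeak hP (fun j hj => (mem_filter.1 hj).2.1)
    (fun j hj => (mem_filter.1 hj).2.2)
  omega

theorem nth_Icc_sdiff_lt_nth {S : Finset ℕ} {m : ℕ} (hSm : S ⊆ Icc 1 m)
    (hS : ∀ x ∈ S, 2 * Nat.count (· ∈ S) (x + 1) < x) {j k : ℕ} (hj : j < #S)
    (hk : k ≤ j + 1) : Nat.nth (· ∈ Icc 1 m \ S) k < Nat.nth (· ∈ S) j := by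
  have hj' : j < #S.finite_toSet.toFinset := by rwa [finite_toSet_toFinset]
  set x := Nat.nth (· ∈ S) j
  have hx : x ∈ S := Nat.nth_mem_of_lt_card (p := (· ∈ S)) S.finite_toSet hj'
  have hcount : Nat.count (· ∈ S) x = j :=
    Nat.count_nth_of_lt_card_finite (p := (· ∈ S)) S.finite_toSet hj'
  have hcount_succ : Nat.count (· ∈ S) (x + 1) = j + 1 := by
    rw [Nat.count_succ, hcount, if_pos hx]
  have := hS x hx
  have := count_mem_Icc_sdiff_add_count hSm (x := x) (by have := mem_Icc.1 (hSm hx); omega)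
  exact Nat.nth_lt_of_lt_count (by omega)

section Interleaved

variable {m d : ℕ} {w : Equiv.Perm (Fin m)} {s t : ℕ → ℕ}

theorem isPeak_of_interleaved (hdm : 2 * d < m)
    (hodd : ∀ (i : Fin m) (j : ℕ), j < d → i.val = 2 * j + 1 → (w i).val + 1 = s j)
    (heven : ∀ (i : Fin m) (j : ℕ), j ≤ d → i.val = 2 * j → (w i).val + 1 = t j)
    (hts : ∀ j < d, t j < s j ∧ t (j + 1) < s j) {j : ℕ} (hj : j < d) :
    IsPeak w ⟨2 * j + 1, by omega⟩ := by
  have hpeak := hodd ⟨2 * j + 1, by omega⟩ j hj rfl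
  have hleft := heven ⟨2 * j + 1 - 1, by omega⟩ j hj.le (by dsimp only; omega)
  have hright := heven ⟨2 * j + 1 + 1, by omega⟩ (j + 1) hj (by dsimp only; omega)
  have := hts j hj
  refine ⟨Nat.succ_pos _, by dsimp only; omega, ?_, ?_⟩ <;>
    rw [Fin.lt_def] <;> dsimp only <;> omega

theorem exists_eq_of_isPeak_of_interleaved
    (hodd : ∀ (i : Fin m) (j : ℕ), j < d → i.val = 2 * j + 1 → (w i).val + 1 = s j)
    (heven : ∀ (i : Fin m) (j : ℕ), j ≤ d → i.val = 2 * j → (w i).val + 1 = t j)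
    (htail : ∀ i : Fin m, 2 * d ≤ i.val → (w i).val + 1 = t (i.val - d))
    (ht_mono : StrictMonoOn t (Set.Iio (m - d))) (hts : ∀ j < d, t j < s j)
    {i : Fin m} (hi : IsPeak w i) : ∃ j < d, (w i).val + 1 = s j := by
  obtain ⟨-, hi1, -, hr⟩ := hi
  rw [Fin.lt_def] at hr
  by_cases hid : i.val < 2 * d
  · obtain ⟨j, hj | hj⟩ := Nat.even_or_odd' i.val
    · have := heven i j (by omega) hj
      have := hodd ⟨i.val + 1, hi1⟩ j (by omega) (by dsimp only; omega)
      have := hts j (by omega)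
      omega
    · exact ⟨j, by omega, hodd i j (by omega) hj⟩
  · have := htail i (by omega)
    have := htail ⟨i.val + 1, hi1⟩ (by dsimp only; omega)
    have := ht_mono (Set.mem_Iio.2 (show i.val - d < m - d by omega))
      (Set.mem_Iio.2 (show i.val + 1 - d < m - d by omega)) (by omega)
    dsimp only at *
    omega

theorem pin_eq_image_of_interleaved (hdm : 2 * d < m)
    (hs : ∀ j < d, ∀ h : 2 * j + 1 < m, (w ⟨2 * j + 1, h⟩).val + 1 = s j)
    (ht : ∀ j < d, ∀ h : 2 * j < m, (w ⟨2 * j, h⟩).val + 1 = t j)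
    (ht2 : ∀ i, 2 * d ≤ i → ∀ h : i < m, (w ⟨i, h⟩).val + 1 = t (i - d))
    (ht_mono : StrictMonoOn t (Set.Iio (m - d)))
    (hts : ∀ j < d, t j < s j ∧ t (j + 1) < s j) :
    Pin w = s '' Set.Iio d := by
  have hodd (i : Fin m) (j : ℕ) (hj : j < d) (hi : i.val = 2 * j + 1) : (w i).val + 1 = s j := by
    obtain ⟨i, h⟩ := i
    subst hi
    exact hs j hj h
  have heven (i : Fin m) (j : ℕ) (hj : j ≤ d) (hi : i.val = 2 * j) : (w i).val + 1 = t j := by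
    obtain ⟨i, h⟩ := i
    subst hi
    rcases hj.lt_or_eq with hj | rfl
    · exact ht j hj h
    · simpa [two_mul] using ht2 (2 * j) le_rfl h
  have htail (i : Fin m) (hi : 2 * d ≤ i.val) : (w i).val + 1 = t (i.val - d) := ht2 _ hi _
  ext v
  constructor
  · rintro ⟨i, hi, rfl⟩
    obtain ⟨j, hj, hij⟩ := exists_eq_of_isPeak_of_interleaved hodd heven htail ht_mono
      (fun j hj => (hts j hj).1) hi
    exact ⟨j, hj, hij.symm⟩
  · rintro ⟨j, hj, rfl⟩
    exact ⟨_, isPeak_of_interleaved hdm hodd heven hts hj, (hs j hj _).symm⟩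

end Interleaved

/-- Positions and values are 1-indexed in the paper: position `p` is index `p - 1` of `Fin m`,
and the value at index `i` is `(w i).val + 1`. -/
theorem canonical_perm_pinnacles_general (S : Finset ℕ) (m d : ℕ) (hS : S.Nonempty)
    (hadm : Admissible S)
    (hm : S.max' hS = m) (hd : S.card = d)
    (w : Equiv.Perm (Fin m))
    (hs : ∀ j < d, ∀ h : 2 * j + 1 < m,
      (w ⟨2 * j + 1, h⟩).val + 1 = (S.sort (· ≤ ·)).getD j 0)
    (ht : ∀ j < d, ∀ h : 2 * j < m,
      (w ⟨2 * j, h⟩).val + 1 = ((Finset.Icc 1 m \ S).sort (· ≤ ·)).getD j 0)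
    (ht2 : ∀ i, 2 * d ≤ i → ∀ h : i < m,
      (w ⟨i, h⟩).val + 1 = ((Finset.Icc 1 m \ S).sort (· ≤ ·)).getD (i - d) 0) :
    Pin w = ↑S := by
  obtain ⟨n, w', hw'⟩ := hadm
  have hbound (x : ℕ) (hx : x ∈ S) := two_mul_count_succ_lt_of_mem_pin hw' hx
  have hSm : S ⊆ Icc 1 m := fun x hx =>
    mem_Icc.2 ⟨by have := hbound x hx; omega, hm ▸ S.le_max' x hx⟩
  have hdm : 2 * d < m := by
    have hcount : Nat.count (· ∈ S) (m + 1) = d := by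
      rw [Nat.count_eq_card_filter_range, filter_mem_eq_inter, inter_eq_right.2, hd]
      exact fun x hx => mem_range.2 (Nat.lt_succ_of_le (mem_Icc.1 (hSm hx)).2)
    have := hbound m (hm ▸ S.max'_mem hS)
    omega
  have hT : #(Icc 1 m \ S) = m - d := by
    rw [card_sdiff_of_subset hSm, Nat.card_Icc, hd, Nat.add_sub_cancel]
  simp only [Finset.sort_getD_eq_nth] at hs ht ht2
  have ht_mono := Nat.nth_strictMonoOn (p := (· ∈ Icc 1 m \ S)) (finite_toSet _)
  rw [finite_toSet_toFinset, hT] at ht_mono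
  have himage := Nat.image_nth_Iio_card (p := (· ∈ S)) S.finite_toSet
  rw [finite_toSet_toFinset, hd] at himage
  have hts (j : ℕ) (hj : j < d) (k : ℕ) (hk : k ≤ j + 1) :=
    nth_Icc_sdiff_lt_nth hSm hbound (hd ▸ hj) hk
  rw [pin_eq_image_of_interleaved hdm hs ht ht2 ht_mono
    fun j hj => ⟨hts j hj j j.le_succ, hts j hj (j + 1) le_rfl⟩]
  exact himage

/-- The canonical permutation `w_S`: pinnacles `s_1 < … < s_d` in the even
positions `2,4,…,2d`, and the non-pinnacles `t_1 < … < t_{m-d}` in increasing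
order in the remaining positions. (Positions and values are 1-indexed; the
permutation is represented on `Fin m`, so position `p` is index `p-1` and the
value at index `i` is `(w i).val + 1`.) -/
theorem canonical_perm_pinnacles (S : Finset ℕ) (m d : ℕ) (hS : S.Nonempty)
    (hpos : ∀ s ∈ S, 0 < s) (hadm : Admissible S)
    (hm : S.max' hS = m) (hd : S.card = d)
    (w : Equiv.Perm (Fin m))
    (hs : ∀ j < d, ∀ h : 2 * j + 1 < m,
      (w ⟨2 * j + 1, h⟩).val + 1 = (S.sort (· ≤ ·)).getD j 0)
    (ht : ∀ j < d, ∀ h : 2 * j < m,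
      (w ⟨2 * j, h⟩).val + 1 = ((Finset.Icc 1 m \ S).sort (· ≤ ·)).getD j 0)
    (ht2 : ∀ i, 2 * d ≤ i → ∀ h : i < m,
      (w ⟨i, h⟩).val + 1 = ((Finset.Icc 1 m \ S).sort (· ≤ ·)).getD (i - d) 0) :
    Pin w = ↑S :=
  canonical_perm_pinnacles_general S m d hS hadm hm hd w hs ht ht2
end

section
/- A finite set S of positive integers is an admissible pinnacle set if and only if for every s ∈ S, the number of elements of S that are ≤ s is less than s/2 (equivalently, writing S = {s_1 < ... < s_d}, one has s_i > 2i for all i). -/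
open Finset

def IsPeakAt (a : ℕ → ℕ) (n i : ℕ) : Prop :=
  0 < i ∧ i + 1 < n ∧ a (i - 1) < a i ∧ a (i + 1) < a i

theorem IsPeakAt.not_isPeakAt_add_one {a : ℕ → ℕ} {n i : ℕ} (h : IsPeakAt a n i) :
    ¬ IsPeakAt a n (i + 1) := by
  rintro ⟨-, -, hleft, -⟩
  exact h.2.2.2.asymm (by simpa using hleft)

theorem isPeakAt_congr {a b : ℕ → ℕ} {n : ℕ} (h : ∀ i < n, a i = b i) (i : ℕ) :
    IsPeakAt a n i ↔ IsPeakAt b n i := by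
  unfold IsPeakAt
  constructor <;> rintro ⟨h0, hn, hl, hr⟩ <;>
    exact ⟨h0, hn, by simpa [h (i - 1) (by omega), h i (by omega), h (i + 1) hn] using hl,
      by simpa [h (i - 1) (by omega), h i (by omega), h (i + 1) hn] using hr⟩

theorem card_insert_max'_add_one_union_image_sub_one {P : Finset ℕ} (hP : P.Nonempty)
    (h0 : 0 ∉ P) (hsucc : ∀ p ∈ P, p + 1 ∉ P) :
    #(insert (P.max' hP + 1) (P ∪ P.image (· - 1))) = 2 * #P + 1 := by
  have hpos : ∀ p ∈ P, 0 < p := fun p hp => Nat.pos_of_ne_zero fun h => h0 (h ▸ hp)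
  have hmax_notMem : P.max' hP + 1 ∉ P ∪ P.image (· - 1) := by
    simp only [mem_union, mem_image, not_or, not_exists, not_and]
    refine ⟨fun h => by have := P.le_max' _ h; omega, fun p hp h => ?_⟩
    have := P.le_max' p hp
    omega
  have hdisj : Disjoint P (P.image (· - 1)) := by
    simp only [disjoint_left, mem_image, not_exists, not_and]
    intro x hx p hp hpx
    have := hpos p hp
    exact hsucc x hx (by rwa [← hpx, Nat.sub_add_cancel this])
  have hinj : Set.InjOn (· - 1) (P : Set ℕ) := fun p hp q hq h => by
    have := hpos p hp; have := hpos q hq; simp only at h; omega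
  rw [card_insert_of_notMem hmax_notMem, card_union_of_disjoint hdisj,
    card_image_of_injOn hinj]
  ring

theorem two_mul_card_lt_of_isPeakAt {a : ℕ → ℕ} {n s : ℕ} (ha : Set.InjOn a (Set.Iio n))
    (ha0 : ∀ i < n, 0 < a i) {P : Finset ℕ} (hP : P.Nonempty)
    (hpeak : ∀ p ∈ P, IsPeakAt a n p) (hle : ∀ p ∈ P, a p ≤ s) : 2 * #P < s := by
  set B := insert (P.max' hP + 1) (P ∪ P.image (· - 1))
  have hcard : #B = 2 * #P + 1 :=
    card_insert_max'_add_one_union_image_sub_one hP (fun h => (hpeak 0 h).1.false)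
      fun p hp => (hpeak p hp).not_isPeakAt_add_one ∘ hpeak (p + 1)
  have hB : ∀ b ∈ B, b < n ∧ a b ≤ s := by
    intro b hb
    simp only [B, mem_insert, mem_union, mem_image] at hb
    rcases hb with rfl | hb | ⟨p, hp, rfl⟩
    · obtain ⟨-, hn, -, hr⟩ := hpeak _ (P.max'_mem hP)
      exact ⟨hn, hr.le.trans (hle _ (P.max'_mem hP))⟩
    · obtain ⟨-, hn, -, -⟩ := hpeak b hb
      exact ⟨by omega, hle b hb⟩
    · obtain ⟨-, hn, hl, -⟩ := hpeak p hp
      exact ⟨by omega, hl.le.trans (hle p hp)⟩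
  have hBs : #B ≤ #(Icc 1 s) :=
    card_le_card_of_injOn a (fun b hb => mem_Icc.2 ⟨ha0 b (hB b hb).1, (hB b hb).2⟩)
      (ha.mono fun b hb => (hB b hb).1)
  simp only [Nat.card_Icc, add_tsub_cancel_right] at hBs
  omega

/-- The one-line notation of `w` with values shifted to `1, …, n`, padded with `0` beyond `n`. -/
def oneLine {n : ℕ} (w : Equiv.Perm (Fin n)) (i : ℕ) : ℕ :=
  if h : i < n then (w ⟨i, h⟩ : ℕ) + 1 else 0

section oneLine

variable {n : ℕ} (w : Equiv.Perm (Fin n))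

theorem oneLine_of_lt {i : ℕ} (h : i < n) : oneLine w i = (w ⟨i, h⟩ : ℕ) + 1 := dif_pos h

theorem oneLine_injOn : Set.InjOn (oneLine w) (Set.Iio n) := fun i hi j hj h => by
  rw [oneLine_of_lt w hi, oneLine_of_lt w hj, add_left_inj, Fin.val_inj, w.apply_eq_iff_eq] at h
  exact Fin.mk.inj h

theorem isPeak_iff_isPeakAt_oneLine (i : Fin n) : IsPeak w i ↔ IsPeakAt (oneLine w) n i := by
  simp only [IsPeak, IsPeakAt]
  have key (h : (i : ℕ) + 1 < n) : (oneLine w (i - 1) < oneLine w i ∧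
      oneLine w (i + 1) < oneLine w i) ↔ (w ⟨i - 1, by omega⟩ < w i ∧ w ⟨i + 1, h⟩ < w i) := by
    rw [oneLine_of_lt w (by omega : (i : ℕ) - 1 < n), oneLine_of_lt w i.isLt, oneLine_of_lt w h]
    simp only [add_lt_add_iff_right, Fin.val_fin_lt]
  exact and_congr_right fun _ => ⟨fun ⟨h, hlr⟩ => ⟨h, (key h).2 hlr⟩,
    fun ⟨h, hlr⟩ => ⟨h, (key h).1 hlr⟩⟩

theorem pin_eq_image_oneLine : Pin w = oneLine w '' {i | IsPeakAt (oneLine w) n i} := by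
  ext v
  constructor
  · rintro ⟨i, hi, rfl⟩
    exact ⟨i, (isPeak_iff_isPeakAt_oneLine w i).1 hi, oneLine_of_lt w i.isLt⟩
  · rintro ⟨i, hi, rfl⟩
    have hin : i < n := by have := hi.2.1; omega
    exact ⟨⟨i, hin⟩, (isPeak_iff_isPeakAt_oneLine w _).2 hi, oneLine_of_lt w hin⟩

end oneLine

theorem exists_pin_eq_image {n : ℕ} {a : ℕ → ℕ} (ha : Set.InjOn a (Set.Iio n))
    (hmaps : ∀ i < n, a i ∈ Icc 1 n) :
    ∃ w : Equiv.Perm (Fin n), Pin w = a '' {i | IsPeakAt a n i} := by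
  have hbound (i : Fin n) : a i - 1 < n := by have := mem_Icc.1 (hmaps i i.isLt); omega
  let g (i : Fin n) : Fin n := ⟨a i - 1, hbound i⟩
  have hg : Function.Injective g := fun i j h => by
    have hi := mem_Icc.1 (hmaps i i.isLt)
    have hj := mem_Icc.1 (hmaps j j.isLt)
    have : a i = a j := by simp only [g, Fin.mk.injEq] at h; omega
    exact Fin.ext (ha i.isLt j.isLt this)
  let w := Equiv.ofBijective g (Finite.injective_iff_bijective.1 hg)
  have hw : ∀ i < n, oneLine w i = a i := fun i hi => by
    have := mem_Icc.1 (hmaps i hi)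
    rw [oneLine_of_lt w hi]
    simp only [w, Equiv.ofBijective_apply, g]
    omega
  refine ⟨w, ?_⟩
  rw [pin_eq_image_oneLine]
  ext v
  simp only [Set.mem_image, Set.mem_ofPred_eq, isPeakAt_congr hw]
  refine exists_congr fun i => and_congr_right fun hi => ?_
  rw [hw i (by have := hi.2.1; omega)]

theorem two_mul_card_filter_le_lt_of_pin_eq {n : ℕ} (w : Equiv.Perm (Fin n)) {S : Finset ℕ}
    (hS : Pin w = S) {s : ℕ} (hs : s ∈ S) : 2 * #(S.filter (· ≤ s)) < s := by
  classical
  rw [pin_eq_image_oneLine] at hS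
  set P := (range n).filter fun i => IsPeakAt (oneLine w) n i ∧ oneLine w i ≤ s
  have hP : S.filter (· ≤ s) = P.image (oneLine w) := by
    ext v
    have hv : v ∈ S ↔ v ∈ (S : Set ℕ) := Iff.rfl
    simp only [mem_filter, mem_image, P, mem_range, hv, ← hS, Set.mem_image, Set.mem_ofPred_eq]
    constructor
    · rintro ⟨⟨i, hi, rfl⟩, hle⟩
      exact ⟨i, ⟨by have := hi.2.1; omega, hi, hle⟩, rfl⟩
    · rintro ⟨i, ⟨-, hi, hle⟩, rfl⟩
      exact ⟨⟨i, hi, rfl⟩, hle⟩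
  have hPinj : Set.InjOn (oneLine w) P :=
    (oneLine_injOn w).mono fun i hi => mem_range.1 (mem_filter.1 hi).1
  rw [hP, card_image_of_injOn hPinj]
  refine two_mul_card_lt_of_isPeakAt (oneLine_injOn w)
    (fun i hi => by rw [oneLine_of_lt w hi]; omega) ?_ (fun p hp => (mem_filter.1 hp).2.1)
    (fun p hp => (mem_filter.1 hp).2.2)
  rw [← card_pos, ← card_image_of_injOn hPinj, ← hP, card_pos]
  exact ⟨s, mem_filter.2 ⟨hs, le_rfl⟩⟩

/-- The sequence `t 0, s 0, t 1, s 1, …, t (d - 1), s (d - 1), t d, t (d + 1), …`. -/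
def interleave (d : ℕ) (s t : ℕ → ℕ) (i : ℕ) : ℕ :=
  if i < 2 * d then (if i % 2 = 1 then s (i / 2) else t (i / 2)) else t (i - d)

section interleave

variable {d : ℕ} {s t : ℕ → ℕ}

theorem interleave_two_mul_add_one {j : ℕ} (hj : j < d) : interleave d s t (2 * j + 1) = s j := by
  rw [interleave, if_pos (by omega), if_pos (by omega)]
  congr 1
  omega

theorem interleave_two_mul {k : ℕ} (hk : k ≤ d) : interleave d s t (2 * k) = t k := by
  unfold interleave
  split_ifs <;> first | omega | congr 1; omega

theorem interleave_of_two_mul_le {i : ℕ} (hi : 2 * d ≤ i) : interleave d s t i = t (i - d) :=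
  if_neg (by omega)

theorem interleave_injective (hs : Set.InjOn s (Set.Iio d)) (ht : t.Injective)
    (hst : ∀ j < d, ∀ k, s j ≠ t k) : (interleave d s t).Injective := by
  intro i i' h
  unfold interleave at h
  split_ifs at h <;>
    first
    | exact absurd h (hst _ (by omega) _)
    | exact absurd h.symm (hst _ (by omega) _)
    | have := hs (show i / 2 < d by omega) (show i' / 2 < d by omega) h; omega
    | have := ht h; omega

theorem interleave_mem {A : Set ℕ} {n : ℕ} (hn : 2 * d ≤ n) (hs : ∀ j < d, s j ∈ A)
    (ht : ∀ k < n - d, t k ∈ A) {i : ℕ} (hi : i < n) : interleave d s t i ∈ A := by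
  unfold interleave
  split_ifs
  · exact hs _ (by omega)
  · exact ht _ (by omega)
  · exact ht _ (by omega)

variable {n : ℕ} (hn : 2 * d < n) (ht : StrictMono t) (hts : ∀ j < d, t (j + 1) < s j)
include hn ht hts

theorem isPeakAt_interleave_iff {i : ℕ} :
    IsPeakAt (interleave d s t) n i ↔ i < 2 * d ∧ i % 2 = 1 := by
  constructor
  · rintro ⟨h0, hin, hl, hr⟩
    by_contra hodd
    rcases Nat.lt_or_ge i (2 * d) with hi | hi
    · obtain ⟨k, rfl⟩ : ∃ k, i = 2 * (k + 1) := ⟨i / 2 - 1, by omega⟩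
      rw [show 2 * (k + 1) - 1 = 2 * k + 1 by omega, interleave_two_mul_add_one (by omega),
        interleave_two_mul (by omega)] at hl
      exact hl.asymm (hts k (by omega))
    · rw [interleave_of_two_mul_le hi, interleave_of_two_mul_le (by omega)] at hr
      exact hr.asymm (ht (by omega))
  · rintro ⟨hi, hodd⟩
    obtain ⟨j, rfl⟩ : ∃ j, i = 2 * j + 1 := ⟨i / 2, by omega⟩
    refine ⟨by omega, by omega, ?_, ?_⟩
    · rw [Nat.add_sub_cancel, interleave_two_mul (by omega), interleave_two_mul_add_one (by omega)]
      exact (ht (Nat.lt_succ_self j)).trans (hts j (by omega))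
    · rw [show 2 * j + 1 + 1 = 2 * (j + 1) by omega, interleave_two_mul (by omega),
        interleave_two_mul_add_one (by omega)]
      exact hts j (by omega)

theorem image_interleave_setOf_isPeakAt :
    interleave d s t '' {i | IsPeakAt (interleave d s t) n i} = s '' Set.Iio d := by
  ext v
  simp only [Set.mem_image, Set.mem_ofPred_eq, isPeakAt_interleave_iff hn ht hts, Set.mem_Iio]
  constructor
  · rintro ⟨i, ⟨hi, hodd⟩, rfl⟩
    refine ⟨i / 2, by omega, ?_⟩
    rw [← interleave_two_mul_add_one (s := s) (t := t) (by omega : i / 2 < d)]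
    congr 1
    omega
  · rintro ⟨j, hj, rfl⟩
    exact ⟨2 * j + 1, ⟨by omega, by omega⟩, interleave_two_mul_add_one hj⟩

end interleave

theorem card_filter_le_eq_count (S : Finset ℕ) (x : ℕ) :
    #(S.filter (· ≤ x)) = Nat.count (· ∈ S) (x + 1) := by
  rw [Nat.count_eq_card_filter_range]
  congr 1
  ext y
  simp only [mem_filter, mem_range, Nat.lt_add_one_iff, and_comm]

theorem count_pos_notMem_add_count_mem {S : Finset ℕ} (h0 : 0 ∉ S) (v : ℕ) :
    Nat.count (fun x => 0 < x ∧ x ∉ S) (v + 1) + Nat.count (· ∈ S) (v + 1) = v := by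
  induction v with
  | zero => simp [Nat.count_one, h0]
  | succ v ih =>
    rw [Nat.count_succ, Nat.count_succ (· ∈ S)]
    by_cases hv : v + 1 ∈ S <;> simp [hv] <;> omega

theorem infinite_setOf_pos_notMem (S : Finset ℕ) :
    (Set.ofPred fun x => 0 < x ∧ x ∉ S).Infinite :=
  (Set.Ioi_infinite 0).sdiff S.finite_toSet

theorem nth_pos_notMem_le {S : Finset ℕ} (h0 : 0 ∉ S) {n : ℕ} (hS : ∀ x ∈ S, x ≤ n) {k : ℕ}
    (hk : k < n - #S) : Nat.nth (fun x => 0 < x ∧ x ∉ S) k ≤ n := by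
  refine Nat.lt_add_one_iff.1 (Nat.nth_lt_of_lt_count ?_)
  have hcount := count_pos_notMem_add_count_mem h0 n
  rw [← card_filter_le_eq_count, filter_true_of_mem hS] at hcount
  omega

section TwoMulCardLt

variable {S : Finset ℕ} (h : ∀ s ∈ S, 2 * #(S.filter (· ≤ s)) < s)
include h

theorem zero_notMem_of_forall_two_mul_card_lt : 0 ∉ S := fun hS => by
  have := h 0 hS
  omega

theorem two_mul_card_le_sup_of_forall_two_mul_card_lt : 2 * #S ≤ S.sup id := by
  rcases S.eq_empty_or_nonempty with hS | hS
  · simp [hS]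
  obtain ⟨m, hm, hmax⟩ := exists_mem_eq_sup S hS id
  replace hmax : S.sup id = m := hmax
  have := h m hm
  rw [filter_true_of_mem fun x hx => hmax ▸ le_sup (f := id) hx] at this
  exact hmax ▸ this.le

theorem nth_pos_notMem_add_one_lt_nth_mem {j : ℕ} (hj : j < #S) :
    Nat.nth (fun x => 0 < x ∧ x ∉ S) (j + 1) < Nat.nth (· ∈ S) j := by
  have hjS : ∀ hf : (Set.ofPred (· ∈ S)).Finite, j < #hf.toFinset := fun _ => by simpa using hj
  have hsj : Nat.nth (· ∈ S) j ∈ S := Nat.nth_mem j hjS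
  obtain ⟨v, hv⟩ : ∃ v, Nat.nth (· ∈ S) j = v + 1 :=
    Nat.exists_eq_add_one.2 (Nat.pos_of_ne_zero fun h' =>
      zero_notMem_of_forall_two_mul_card_lt h (h' ▸ hsj))
  have hbound := h _ hsj
  rw [card_filter_le_eq_count, Nat.count_nth_succ hjS] at hbound
  have hcount := count_pos_notMem_add_count_mem (zero_notMem_of_forall_two_mul_card_lt h) v
  rw [← hv, Nat.count_nth hjS] at hcount
  refine Nat.nth_lt_of_lt_count ?_
  omega

theorem admissible_of_forall_two_mul_card_filter_le_lt : Admissible S := by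
  set n := S.sup id + 1
  have h0 := zero_notMem_of_forall_two_mul_card_lt h
  have hfin : (Set.ofPred (· ∈ S)).Finite := S.finite_toSet
  have hcardS : #hfin.toFinset = #S := by simp
  have hSn : ∀ x ∈ S, x ∈ Icc 1 n := fun x hx => mem_Icc.2
    ⟨Nat.pos_of_ne_zero (by rintro rfl; exact h0 hx), (le_sup (f := id) hx).trans (Nat.le_succ _)⟩
  have hn : 2 * #S < n := Nat.lt_add_one_iff.2 (two_mul_card_le_sup_of_forall_two_mul_card_lt h)
  set s := Nat.nth (· ∈ S)
  set t := Nat.nth fun x => 0 < x ∧ x ∉ S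
  have hs_mem : ∀ j < #S, s j ∈ S := fun j hj => Nat.nth_mem_of_lt_card hfin (hcardS ▸ hj)
  have ht_mem : ∀ k, 0 < t k ∧ t k ∉ S := Nat.nth_mem_of_infinite (infinite_setOf_pos_notMem S)
  have hst : ∀ j < #S, ∀ k, s j ≠ t k := fun j hj k hjk => (ht_mem k).2 (hjk ▸ hs_mem j hj)
  obtain ⟨w, hw⟩ := exists_pin_eq_image (n := n) (a := interleave #S s t)
    ((interleave_injective (hcardS ▸ Nat.nth_injOn hfin)
      (Nat.nth_injective (infinite_setOf_pos_notMem S)) hst).injOn)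
    (fun i hi => interleave_mem hn.le (fun j hj => hSn _ (hs_mem j hj))
      (fun k hk => mem_Icc.2 ⟨(ht_mem k).1,
        nth_pos_notMem_le h0 (fun x hx => (mem_Icc.1 (hSn x hx)).2) hk⟩) hi)
  refine ⟨n, w, ?_⟩
  rw [hw, image_interleave_setOf_isPeakAt hn (Nat.nth_strictMono (infinite_setOf_pos_notMem S))
    (fun j => nth_pos_notMem_add_one_lt_nth_mem h), ← hcardS, Nat.image_nth_Iio_card]
  rfl

end TwoMulCardLt

theorem admissible_iff_general (S : Finset ℕ) :
    Admissible S ↔ ∀ s ∈ S, 2 * (S.filter (· ≤ s)).card < s :=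
  ⟨fun ⟨_, w, hw⟩ _ hs => two_mul_card_filter_le_lt_of_pin_eq w hw hs,
    admissible_of_forall_two_mul_card_filter_le_lt⟩

theorem admissible_iff (S : Finset ℕ) (hpos : ∀ s ∈ S, 0 < s) :
    Admissible S ↔ ∀ s ∈ S, 2 * (S.filter (· ≤ s)).card < s :=
  admissible_iff_general S
end
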